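/- Let a < b, N ≥ 1, T ≥ 1. For each 1 ≤ t ≤ T let F_{1,t}, …, F_{N,t} be distribution functions on [a,b], let p_{i,t} ∈ [0,1] be confidence levels with Σ_{j=1}^N p_{j,t} w_{j,t} > 0 at every step, and let y_t ∈ [a,b] be the outcomes. Define w_{i,1} = 1/N, normalized weights w*_{i,t} = p_{i,t} w_{i,t} / Σ_{j=1}^N p_{j,t} w_{j,t}, the learner's forecast F_t(u) = 1/2 − (1/4)·ln( (Σ_{i=1}^N w*_{i,t} e^{−2 F_{i,t}(u)²}) / (Σ_{i=1}^N w*_{i,t} e^{−2 (1 − F_{i,t}(u))²}) ) for u ∈ [a,b], and the weight update w_{i,t+1} = w_{i,t} · exp(−(2/(b−a))·(p_{i,t}·CRPS(F_{i,t}, y_t) + (1 − p_{i,t})·CRPS(F_t, y_t))). Then for every i with 1 ≤ i ≤ N: Σ_{t=1}^T p_{i,t}·(CRPS(F_t, y_t) − CRPS(F_{i,t}, y_t)) ≤ ((b−a)/2)·ln N. -/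

import Mathlib

/-- A distribution function on `[a,b]`: nondecreasing on `[a,b]` with `F a = 0`, `F b = 1`. -/
def DistFunc (a b : ℝ) (F : ℝ → ℝ) : Prop :=
  MonotoneOn F (Set.Icc a b) ∧ F a = 0 ∧ F b = 1

/-- The continuous ranked probability score
`CRPS(F, y) = ∫_a^b (F u - H(u - y))^2 du`, where `H` is the Heaviside function
(`H(u - y) = 1` iff `u ≥ y`). -/
noncomputable def CRPS (a b : ℝ) (F : ℝ → ℝ) (y : ℝ) : ℝ :=
  ∫ u in a..b, (F u - (if y ≤ u then (1 : ℝ) else 0)) ^ 2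

/-!
With `η = 2 / (b - a)`, the potential `∑ i, w i t` of the Aggregating Algorithm shrinks at each
step by at least the factor `exp (-η ℓ_t)`, `ℓ_t` the learner's loss, as soon as `ℓ_t` obeys the
mixability inequality `ℓ_t ≤ -(1/η) log ∑ i, w*_{i,t} exp (-η ℓ_{i,t})`: experts abstaining with
probability `1 - p` are charged the learner's loss, and convexity of `exp` absorbs the mixture.
Since one weight is at most the whole potential, comparing `w i (T+1)` with `∑ j, w j (T+1)`
gives the regret bound `(1/η) log N`.

CRPS is `η`-mixable with the given forecast. Pointwise in `u`, the integrand is the square loss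
on binary outcomes, which is `2`-mixable with substitution function `F_t(u)`; this is Jensen's
inequality for the concave function whose graph is the curve `(e^{-2f²}, e^{-2(1-f)²})`,
`0 ≤ f ≤ 1`. Integrating over `[a, b]`, convexity of `z ↦ log ∑ i, q i * exp (z i)` (its tangent
plane at the averaged exponents) turns `2`-mixability of the integrand into
`2 / (b - a)`-mixability of the integral.
-/

open Real Set MeasureTheory
open scoped Interval

lemma log_mem_Icc_of_mem_Icc_exp {x : ℝ} (hx : x ∈ Icc (exp (-2)) 1) : log x ∈ Icc (-2) 0 := by
  have hx0 : 0 < x := (exp_pos _).trans_le hx.1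
  exact ⟨by simpa using log_le_log (exp_pos _) hx.1, log_nonpos hx0.le hx.2⟩

lemma exp_neg_two_mul_mem_Icc {x : ℝ} (hx : x ∈ Icc (0 : ℝ) 1) : exp (-2 * x) ∈ Icc (exp (-2)) 1 :=
  ⟨exp_le_exp.2 (by linarith [hx.2]), exp_le_one_iff.2 (by linarith [hx.1])⟩

lemma sq_mem_Icc_zero_one {f : ℝ} (hf : f ∈ Icc (0 : ℝ) 1) : f ^ 2 ∈ Icc (0 : ℝ) 1 :=
  ⟨sq_nonneg f, pow_le_one₀ hf.1 hf.2⟩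

section BrierGame

noncomputable def brierRoot (x : ℝ) : ℝ := √(-log x / 2)

/-- The curve `f ↦ (exp (-2 f²), exp (-2 (1 - f)²))`, `0 ≤ f ≤ 1`, as a graph over its first
coordinate (see `brierCurve_exp_neg_two_mul_sq`); `brierRoot` inverts `f ↦ exp (-2 f²)`. -/
noncomputable def brierCurve (x : ℝ) : ℝ := x * exp (4 * brierRoot x - 2)

lemma brierRoot_exp_neg_two_mul_sq {f : ℝ} (hf : 0 ≤ f) : brierRoot (exp (-2 * f ^ 2)) = f := by
  rw [brierRoot, log_exp, show -(-2 * f ^ 2) / 2 = f ^ 2 by ring, sqrt_sq hf]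

lemma brierCurve_exp_neg_two_mul_sq {f : ℝ} (hf : 0 ≤ f) :
    brierCurve (exp (-2 * f ^ 2)) = exp (-2 * (1 - f) ^ 2) := by
  rw [brierCurve, brierRoot_exp_neg_two_mul_sq hf, ← exp_add]
  ring_nf

lemma exp_neg_two_mul_brierRoot_sq {x : ℝ} (hx0 : 0 < x) (hx1 : x ≤ 1) :
    exp (-2 * brierRoot x ^ 2) = x := by
  rw [brierRoot, sq_sqrt (by linarith [log_nonpos hx0.le hx1]),
    show -2 * (-log x / 2) = log x by ring, exp_log hx0]

lemma brierRoot_mem_Ioo {x : ℝ} (hx : x ∈ Ioo (exp (-2)) 1) : brierRoot x ∈ Ioo 0 1 := by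
  have hx0 : 0 < x := (exp_pos _).trans hx.1
  have hlog : -2 < log x := by simpa using log_lt_log (exp_pos _) hx.1
  have hlog' : log x < 0 := log_neg hx0 hx.2
  refine ⟨sqrt_pos.2 (by linarith), ?_⟩
  rw [brierRoot, sqrt_lt' one_pos]
  linarith

lemma hasDerivAt_brierRoot {x : ℝ} (hx : x ∈ Ioo (exp (-2)) 1) :
    HasDerivAt brierRoot (-(4 * x * brierRoot x)⁻¹) x := by
  have hx0 : 0 < x := (exp_pos _).trans hx.1
  have hr := (brierRoot_mem_Ioo hx).1
  refine (((hasDerivAt_log hx0.ne').neg.div_const 2).sqrt (sqrt_pos.1 hr).ne').congr_deriv ?_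
  change -x⁻¹ / 2 / (2 * brierRoot x) = _
  field_simp
  ring

lemma hasDerivAt_brierCurve {x : ℝ} (hx : x ∈ Ioo (exp (-2)) 1) :
    HasDerivAt brierCurve (exp (4 * brierRoot x - 2) * (1 - (brierRoot x)⁻¹)) x := by
  have hx0 : 0 < x := (exp_pos _).trans hx.1
  have hr := (brierRoot_mem_Ioo hx).1
  refine ((hasDerivAt_id x).mul
    (((hasDerivAt_brierRoot hx).const_mul 4).sub_const 2).exp).congr_deriv ?_
  rw [id]
  field_simp
  ring

lemma hasDerivAt_deriv_brierCurve {x : ℝ} (hx : x ∈ Ioo (exp (-2)) 1) :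
    HasDerivAt (fun x => exp (4 * brierRoot x - 2) * (1 - (brierRoot x)⁻¹))
      (-exp (4 * brierRoot x - 2) * (4 * x * brierRoot x)⁻¹ * (2 - (brierRoot x)⁻¹) ^ 2) x := by
  have hx0 : 0 < x := (exp_pos _).trans hx.1
  have hr := (brierRoot_mem_Ioo hx).1
  have hd := hasDerivAt_brierRoot hx
  refine (((hd.const_mul 4).sub_const 2).exp.mul ((hd.inv hr.ne').const_sub 1)).congr_deriv ?_
  rw [Pi.inv_apply]
  field_simp
  ring

lemma concaveOn_brierCurve : ConcaveOn ℝ (Icc (exp (-2)) 1) brierCurve := by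
  have hpos : ∀ x ∈ Icc (exp (-2)) 1, 0 < x := fun x hx => (exp_pos _).trans_le hx.1
  refine concaveOn_of_hasDerivWithinAt2_nonpos (convex_Icc _ _) ?_
    (fun x hx => (hasDerivAt_brierCurve (by rwa [interior_Icc] at hx)).hasDerivWithinAt)
    (fun x hx => (hasDerivAt_deriv_brierCurve (by rwa [interior_Icc] at hx)).hasDerivWithinAt) ?_
  · refine continuousOn_id.mul (ContinuousOn.rexp (ContinuousOn.sub ?_ continuousOn_const))
    refine (ContinuousOn.sqrt ?_).const_smul (4 : ℝ)
    exact ((continuousOn_log.mono fun x hx => (hpos x hx).ne').neg).div_const 2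
  · intro x hx
    rw [interior_Icc] at hx
    have := (brierRoot_mem_Ioo hx).1
    have := hpos x (Ioo_subset_Icc_self hx)
    have : 0 < exp (4 * brierRoot x - 2) * (4 * x * brierRoot x)⁻¹ := by positivity
    rw [neg_mul]
    exact mul_nonpos_of_nonpos_of_nonneg (by linarith) (sq_nonneg _)

variable {N : ℕ} {q : Fin N → ℝ}

lemma sum_mul_exp_neg_two_mul_mem_Icc (hq0 : ∀ i, 0 ≤ q i) (hq1 : ∑ i, q i = 1) {x : Fin N → ℝ}
    (hx : ∀ i, x i ∈ Icc (0 : ℝ) 1) : ∑ i, q i * exp (-2 * x i) ∈ Icc (exp (-2)) 1 :=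
  (convex_Icc _ _).sum_mem (fun i _ => hq0 i) hq1 fun i _ => exp_neg_two_mul_mem_Icc (hx i)

lemma log_sum_mul_exp_one_sub_sq_le (hq0 : ∀ i, 0 ≤ q i) (hq1 : ∑ i, q i = 1) {f : Fin N → ℝ}
    (hf : ∀ i, f i ∈ Icc (0 : ℝ) 1) :
    log (∑ i, q i * exp (-2 * (1 - f i) ^ 2)) ≤
      -2 * (1 - brierRoot (∑ i, q i * exp (-2 * f i ^ 2))) ^ 2 := by
  set A := ∑ i, q i * exp (-2 * f i ^ 2)
  have hA : A ∈ Icc (exp (-2)) 1 :=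
    sum_mul_exp_neg_two_mul_mem_Icc hq0 hq1 fun i => sq_mem_Icc_zero_one (hf i)
  have hf' : ∀ i, (1 - f i) ^ 2 ∈ Icc (0 : ℝ) 1 := fun i =>
    sq_mem_Icc_zero_one ⟨by linarith [(hf i).2], by linarith [(hf i).1]⟩
  have hB := sum_mul_exp_neg_two_mul_mem_Icc hq0 hq1 hf'
  have hjensen : ∑ i, q i * exp (-2 * (1 - f i) ^ 2) ≤ brierCurve A := by
    have := concaveOn_brierCurve.le_map_sum (t := Finset.univ) (fun i _ => hq0 i) hq1
      fun i _ => exp_neg_two_mul_mem_Icc (sq_mem_Icc_zero_one (hf i))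
    simpa only [smul_eq_mul, brierCurve_exp_neg_two_mul_sq (hf _).1] using this
  rw [log_le_iff_le_exp ((exp_pos _).trans_le hB.1)]
  calc _ ≤ brierCurve A := hjensen
    _ = _ := by
      conv_lhs => rw [← exp_neg_two_mul_brierRoot_sq ((exp_pos _).trans_le hA.1) hA.2]
      exact brierCurve_exp_neg_two_mul_sq (sqrt_nonneg _)


variable (q) in
noncomputable def brierMix (f : Fin N → ℝ) : ℝ :=
  1 / 2 - 1 / 4 * log ((∑ i, q i * exp (-2 * f i ^ 2)) / ∑ i, q i * exp (-2 * (1 - f i) ^ 2))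

lemma brierMix_one_sub (f : Fin N → ℝ) : brierMix q (fun i => 1 - f i) = 1 - brierMix q f := by
  have h : ∑ i, q i * exp (-2 * (1 - (1 - f i)) ^ 2) = ∑ i, q i * exp (-2 * f i ^ 2) := by
    simp only [sub_sub_cancel]
  rw [brierMix, brierMix, h, ← inv_div (∑ i, q i * exp (-2 * f i ^ 2)), log_inv]
  ring

lemma brierMix_sq_le (hq0 : ∀ i, 0 ≤ q i) (hq1 : ∑ i, q i = 1) {f : Fin N → ℝ}
    (hf : ∀ i, f i ∈ Icc (0 : ℝ) 1) :
    brierMix q f ^ 2 ≤ -(1 / 2) * log (∑ i, q i * exp (-2 * f i ^ 2)) := by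
  have hA := sum_mul_exp_neg_two_mul_mem_Icc hq0 hq1 fun i => sq_mem_Icc_zero_one (hf i)
  have hB := sum_mul_exp_neg_two_mul_mem_Icc hq0 hq1 (x := fun i => (1 - f i) ^ 2) fun i =>
    sq_mem_Icc_zero_one ⟨by linarith [(hf i).2], by linarith [(hf i).1]⟩
  have hjensen := log_sum_mul_exp_one_sub_sq_le hq0 hq1 hf
  have hlogA := log_mem_Icc_of_mem_Icc_exp hA
  have hlogB := log_mem_Icc_of_mem_Icc_exp hB
  rw [brierMix, log_div ((exp_pos _).trans_le hA.1).ne' ((exp_pos _).trans_le hB.1).ne']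
  set r := brierRoot (∑ i, q i * exp (-2 * f i ^ 2))
  have hr0 : 0 ≤ r := sqrt_nonneg _
  have hr : r ^ 2 = -log (∑ i, q i * exp (-2 * f i ^ 2)) / 2 := sq_sqrt (by linarith [hlogA.2])
  -- `0 ≤ brierMix q f ≤ r`; the upper bound is where Jensen's inequality enters
  have hmix0 : 0 ≤ 1 / 2 - 1 / 4 * (log (∑ i, q i * exp (-2 * f i ^ 2)) -
      log (∑ i, q i * exp (-2 * (1 - f i) ^ 2))) := by linarith [hlogA.2, hlogB.1]
  have hmixr : 1 / 2 - 1 / 4 * (log (∑ i, q i * exp (-2 * f i ^ 2)) -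
      log (∑ i, q i * exp (-2 * (1 - f i) ^ 2))) ≤ r := by nlinarith
  nlinarith

lemma brierMix_sub_sq_le (hq0 : ∀ i, 0 ≤ q i) (hq1 : ∑ i, q i = 1) {f : Fin N → ℝ}
    (hf : ∀ i, f i ∈ Icc (0 : ℝ) 1) {ω : ℝ} (hω : ω = 0 ∨ ω = 1) :
    (brierMix q f - ω) ^ 2 ≤ -(1 / 2) * log (∑ i, q i * exp (-2 * (f i - ω) ^ 2)) := by
  rcases hω with rfl | rfl
  · simpa only [sub_zero] using brierMix_sq_le hq0 hq1 hf
  · have := brierMix_sq_le hq0 hq1 (f := fun i => 1 - f i)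
      fun i => ⟨by linarith [(hf i).2], by linarith [(hf i).1]⟩
    rw [brierMix_one_sub] at this
    convert this using 1 <;> ring_nf

end BrierGame

section LogSumExp

variable {N : ℕ} {q : Fin N → ℝ}

lemma exp_sum_mul_le_sum_mul_exp (hq0 : ∀ i, 0 ≤ q i) (hq1 : ∑ i, q i = 1) (x : Fin N → ℝ) :
    exp (∑ i, q i * x i) ≤ ∑ i, q i * exp (x i) := by
  simpa only [smul_eq_mul] using
    convexOn_exp.map_sum_le (t := Finset.univ) (fun i _ => hq0 i) hq1 fun i _ => mem_univ (x i)

lemma sum_mul_exp_pos (hq0 : ∀ i, 0 ≤ q i) (hq1 : ∑ i, q i = 1) (x : Fin N → ℝ) :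
    0 < ∑ i, q i * exp (x i) :=
  (exp_pos _).trans_le (exp_sum_mul_le_sum_mul_exp hq0 hq1 x)

/-- Tangent-plane inequality at `ζ` for the convex function `z ↦ log ∑ i, q i * exp (z i)`. -/
lemma log_sum_mul_exp_add_le (hq0 : ∀ i, 0 ≤ q i) (hq1 : ∑ i, q i = 1) (ζ z : Fin N → ℝ) :
    log (∑ i, q i * exp (ζ i)) + ∑ i, q i * exp (ζ i) / (∑ j, q j * exp (ζ j)) * (z i - ζ i) ≤
      log (∑ i, q i * exp (z i)) := by
  set D := ∑ j, q j * exp (ζ j)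
  have hD := sum_mul_exp_pos hq0 hq1 ζ
  have hr0 : ∀ i, 0 ≤ q i * exp (ζ i) / D := fun i => by have := hq0 i; positivity
  have hr1 : ∑ i, q i * exp (ζ i) / D = 1 := by rw [← Finset.sum_div, div_self hD.ne']
  have hjensen := exp_sum_mul_le_sum_mul_exp hr0 hr1 fun i => z i - ζ i
  have hsum : ∑ i, q i * exp (ζ i) / D * exp (z i - ζ i) = (∑ i, q i * exp (z i)) / D := by
    rw [Finset.sum_div]
    refine Finset.sum_congr rfl fun i _ => ?_
    rw [exp_sub]
    field_simp
  rw [hsum, ← le_log_iff_exp_le (div_pos (sum_mul_exp_pos hq0 hq1 z) hD),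
    log_div (sum_mul_exp_pos hq0 hq1 z).ne' hD.ne'] at hjensen
  linarith

lemma mul_log_sum_mul_exp_integral_le {a b : ℝ} (hab : a < b) (hq0 : ∀ i, 0 ≤ q i)
    (hq1 : ∑ i, q i = 1) {z : Fin N → ℝ → ℝ} (hz : ∀ i, IntervalIntegrable (z i) volume a b)
    (hlog : IntervalIntegrable (fun u => log (∑ i, q i * exp (z i u))) volume a b) :
    (b - a) * log (∑ i, q i * exp ((∫ u in a..b, z i u) / (b - a))) ≤
      ∫ u in a..b, log (∑ i, q i * exp (z i u)) := by
  set ζ : Fin N → ℝ := fun i => (∫ u in a..b, z i u) / (b - a)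
  set r : Fin N → ℝ := fun i => q i * exp (ζ i) / ∑ j, q j * exp (ζ j)
  have hsupport : IntervalIntegrable (fun u => ∑ i, r i * (z i u - ζ i)) volume a b :=
    have hterm := fun i => ((hz i).sub intervalIntegrable_const).const_mul (r i)
    ⟨integrable_finsetSum _ fun i _ => (hterm i).1, integrable_finsetSum _ fun i _ => (hterm i).2⟩
  have hintegral : ∫ u in a..b, (log (∑ i, q i * exp (ζ i)) + ∑ i, r i * (z i u - ζ i)) =
      (b - a) * log (∑ i, q i * exp (ζ i)) := by
    have hζ : ∀ i, (∫ u in a..b, z i u) - (b - a) * ζ i = 0 := fun i => by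
      have := sub_ne_zero.2 hab.ne'
      simp only [ζ]; field_simp; ring
    rw [intervalIntegral.integral_add intervalIntegrable_const hsupport,
      intervalIntegral.integral_finsetSum fun i _ =>
        ((hz i).sub intervalIntegrable_const).const_mul _]
    simp only [intervalIntegral.integral_const_mul,
      intervalIntegral.integral_sub (hz _) intervalIntegrable_const,
      intervalIntegral.integral_const, smul_eq_mul, hζ, mul_zero, Finset.sum_const_zero]
    ring
  rw [← hintegral]
  exact intervalIntegral.integral_mono_on hab.le (intervalIntegrable_const.add hsupport) hlog
    fun u _ => log_sum_mul_exp_add_le hq0 hq1 ζ fun i => z i u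

end LogSumExp

lemma intervalIntegrable_of_abs_le {a b C : ℝ} (hab : a ≤ b) {g : ℝ → ℝ}
    (hg : AEMeasurable g (volume.restrict (Ι a b))) (hC : ∀ u ∈ Icc a b, |g u| ≤ C) :
    IntervalIntegrable g volume a b := by
  refine (intervalIntegrable_const (c := C)).mono_fun' hg.aestronglyMeasurable ?_
  refine ae_restrict_of_forall_mem measurableSet_uIoc fun u hu => hC u ?_
  rw [uIoc_of_le hab] at hu
  exact Ioc_subset_Icc_self hu

lemma DistFunc.mem_Icc {a b : ℝ} {F : ℝ → ℝ} (hF : DistFunc a b F) {u : ℝ} (hu : u ∈ Icc a b) :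
    F u ∈ Icc (0 : ℝ) 1 := by
  have ha : a ∈ Icc a b := ⟨le_rfl, hu.1.trans hu.2⟩
  have hb : b ∈ Icc a b := ⟨hu.1.trans hu.2, le_rfl⟩
  exact ⟨hF.2.1 ▸ hF.1 ha hu hu.1, hF.2.2 ▸ hF.1 hu hb hu.2⟩

lemma DistFunc.aemeasurable {a b : ℝ} {F : ℝ → ℝ} (hab : a ≤ b) (hF : DistFunc a b F) :
    AEMeasurable F (volume.restrict (Ι a b)) :=
  ((uIcc_of_le hab ▸ hF.1).intervalIntegrable (μ := volume)).def'.aestronglyMeasurable.aemeasurable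

theorem crps_le_neg_mul_log_sum_mul_exp {a b : ℝ} (hab : a < b) {N : ℕ} {q : Fin N → ℝ}
    (hq0 : ∀ i, 0 ≤ q i) (hq1 : ∑ i, q i = 1) {F : Fin N → ℝ → ℝ}
    (hF01 : ∀ i, ∀ u ∈ Icc a b, F i u ∈ Icc (0 : ℝ) 1)
    (hFm : ∀ i, AEMeasurable (F i) (volume.restrict (Ι a b))) (y : ℝ) {G : ℝ → ℝ}
    (hG : ∀ u ∈ Icc a b, G u = brierMix q fun i => F i u) :
    CRPS a b G y ≤ -((b - a) / 2) * log (∑ i, q i * exp (-(2 / (b - a)) * CRPS a b (F i) y)) := by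
  set H : ℝ → ℝ := fun u => if y ≤ u then 1 else 0
  have hH : ∀ u, H u = 0 ∨ H u = 1 := fun u => by by_cases h : y ≤ u <;> simp [H, h]
  have hHm : Measurable H := measurable_const.ite measurableSet_Ici measurable_const
  set z : Fin N → ℝ → ℝ := fun i u => -2 * (F i u - H u) ^ 2
  have hloss : ∀ i, ∀ u ∈ Icc a b, (F i u - H u) ^ 2 ∈ Icc (0 : ℝ) 1 := fun i u hu => by
    have := hF01 i u hu
    rcases hH u with h | h <;> rw [h] <;> constructor <;> nlinarith [this.1, this.2]
  have hlogS : ∀ u ∈ Icc a b, log (∑ i, q i * exp (z i u)) ∈ Icc (-2) 0 := fun u hu =>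
    log_mem_Icc_of_mem_Icc_exp (sum_mul_exp_neg_two_mul_mem_Icc hq0 hq1 fun i => hloss i u hu)
  have hz : ∀ i, IntervalIntegrable (z i) volume a b := fun i =>
    intervalIntegrable_of_abs_le (C := 2) hab.le (by fun_prop) fun u hu => by
      have := hloss i u hu
      simp only [z, abs_le]; constructor <;> linarith [this.1, this.2]
  have hlog : IntervalIntegrable (fun u => log (∑ i, q i * exp (z i u))) volume a b :=
    intervalIntegrable_of_abs_le (C := 2) hab.le (by fun_prop) fun u hu => by
      have := hlogS u hu
      simp only [abs_le]; constructor <;> linarith [this.1, this.2]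
  have hpoint : ∀ u ∈ Icc a b, (G u - H u) ^ 2 ≤ -(1 / 2) * log (∑ i, q i * exp (z i u)) :=
    fun u hu => hG u hu ▸ brierMix_sub_sq_le hq0 hq1 (fun i => hF01 i u hu) (hH u)
  have hintz : ∀ i, (∫ u in a..b, z i u) / (b - a) = -(2 / (b - a)) * CRPS a b (F i) y :=
    fun i => by rw [intervalIntegral.integral_const_mul, CRPS]; ring
  calc CRPS a b G y ≤ ∫ u in a..b, -(1 / 2) * log (∑ i, q i * exp (z i u)) := by
        rw [CRPS, intervalIntegral.integral_of_le hab.le, intervalIntegral.integral_of_le hab.le]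
        refine integral_mono_of_nonneg (.of_forall fun u => sq_nonneg _)
          (hlog.const_mul _).1 (ae_restrict_of_forall_mem measurableSet_Ioc fun u hu => ?_)
        exact hpoint u (Ioc_subset_Icc_self hu)
    _ = -(1 / 2) * ∫ u in a..b, log (∑ i, q i * exp (z i u)) :=
        intervalIntegral.integral_const_mul _ _
    _ ≤ -(1 / 2) * ((b - a) * log (∑ i, q i * exp ((∫ u in a..b, z i u) / (b - a)))) :=
        mul_le_mul_of_nonpos_left (mul_log_sum_mul_exp_integral_le hab hq0 hq1 hz hlog)
          (by norm_num)
    _ = _ := by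
        simp only [hintz]
        ring

section ConfidenceStep

variable {N : ℕ}

lemma sum_mul_exp_le_of_le_neg_log {c ℓ : Fin N → ℝ} {η L : ℝ} (hη : 0 < η)
    (hc : ∀ i, 0 ≤ c i) (hC : 0 < ∑ i, c i)
    (h : L ≤ -(1 / η) * log (∑ i, c i / (∑ j, c j) * exp (-η * ℓ i))) :
    ∑ i, c i * exp (-η * ℓ i) ≤ (∑ i, c i) * exp (-η * L) := by
  have hq0 : ∀ i, 0 ≤ c i / ∑ j, c j := fun i => div_nonneg (hc i) hC.le
  have hq1 : ∑ i, c i / ∑ j, c j = 1 := by rw [← Finset.sum_div, div_self hC.ne']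
  have hX := sum_mul_exp_pos hq0 hq1 fun i => -η * ℓ i
  have hlog : log (∑ i, c i / (∑ j, c j) * exp (-η * ℓ i)) ≤ -η * L := by
    have := mul_le_mul_of_nonneg_left h hη.le
    rw [← mul_assoc, mul_neg, mul_one_div_cancel hη.ne', neg_one_mul] at this
    linarith
  rw [log_le_iff_le_exp hX] at hlog
  calc ∑ i, c i * exp (-η * ℓ i) = (∑ i, c i) * ∑ i, c i / (∑ j, c j) * exp (-η * ℓ i) := by
        rw [Finset.mul_sum]
        exact Finset.sum_congr rfl fun i _ => by field_simp
    _ ≤ (∑ i, c i) * exp (-η * L) := by gcongr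

lemma sum_mul_exp_confidence_le {w p ℓ : Fin N → ℝ} {η L : ℝ} (hw : ∀ i, 0 ≤ w i)
    (hp : ∀ i, p i ∈ Icc (0 : ℝ) 1)
    (hmix : ∑ i, p i * w i * exp (-η * ℓ i) ≤ (∑ i, p i * w i) * exp (-η * L)) :
    ∑ i, w i * exp (-η * (p i * ℓ i + (1 - p i) * L)) ≤ exp (-η * L) * ∑ i, w i := by
  calc ∑ i, w i * exp (-η * (p i * ℓ i + (1 - p i) * L))
      ≤ ∑ i, w i * (p i * exp (-η * ℓ i) + (1 - p i) * exp (-η * L)) := by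
        refine Finset.sum_le_sum fun i _ => mul_le_mul_of_nonneg_left ?_ (hw i)
        have := convexOn_exp.2 (mem_univ (-η * ℓ i)) (mem_univ (-η * L)) (hp i).1
          (sub_nonneg.2 (hp i).2) (add_sub_cancel _ _)
        simp only [smul_eq_mul] at this
        convert this using 2
        ring
    _ = ∑ i, p i * w i * exp (-η * ℓ i) + (∑ i, (1 - p i) * w i) * exp (-η * L) := by
        rw [Finset.sum_mul, ← Finset.sum_add_distrib]
        exact Finset.sum_congr rfl fun i _ => by ring
    _ ≤ (∑ i, p i * w i) * exp (-η * L) + (∑ i, (1 - p i) * w i) * exp (-η * L) := by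
        gcongr
    _ = exp (-η * L) * ∑ i, w i := by
        rw [← add_mul, ← Finset.sum_add_distrib, mul_comm]
        simp only [← add_mul, add_sub_cancel, one_mul]

end ConfidenceStep

namespace AggregatingAlgorithm

variable {N : ℕ} {η : ℝ} {p w ℓ : Fin N → ℕ → ℝ} {L : ℕ → ℝ}

lemma weight_pos (hw1 : ∀ i, w i 1 = 1 / N)
    (hwrec : ∀ i t, 1 ≤ t → w i (t + 1) = w i t * exp (-η * (p i t * ℓ i t + (1 - p i t) * L t)))
    (i : Fin N) {t : ℕ} (ht : 1 ≤ t) : 0 < w i t := by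
  induction t, ht using Nat.le_induction with
  | base => rw [hw1]; have := i.pos; positivity
  | succ t ht ih => rw [hwrec i t ht]; positivity

lemma weight_eq
    (hwrec : ∀ i t, 1 ≤ t → w i (t + 1) = w i t * exp (-η * (p i t * ℓ i t + (1 - p i t) * L t)))
    (i : Fin N) (t : ℕ) :
    w i (t + 1) = w i 1 * exp (-η * ∑ s ∈ Finset.Icc 1 t, (p i s * ℓ i s + (1 - p i s) * L s)) := by
  induction t with
  | zero => simp
  | succ t ih =>
    rw [hwrec i (t + 1) (by omega), ih, Finset.sum_Icc_succ_top (by omega), mul_assoc, ← exp_add]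
    ring_nf

lemma sum_weight_le (hp : ∀ i t, p i t ∈ Icc (0 : ℝ) 1) (hw1 : ∀ i, w i 1 = 1 / N)
    (hwrec : ∀ i t, 1 ≤ t → w i (t + 1) = w i t * exp (-η * (p i t * ℓ i t + (1 - p i t) * L t)))
    {T : ℕ} (hmix : ∀ t, 1 ≤ t → t ≤ T →
      ∑ i, p i t * w i t * exp (-η * ℓ i t) ≤ (∑ i, p i t * w i t) * exp (-η * L t)) :
    ∑ i, w i (T + 1) ≤ exp (-η * ∑ t ∈ Finset.Icc 1 T, L t) := by
  induction T with
  | zero =>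
    simp only [zero_add, hw1, Finset.sum_const, Finset.card_univ, Fintype.card_fin, nsmul_eq_mul,
      Finset.Icc_eq_empty_of_lt one_pos, Finset.sum_empty, mul_zero, exp_zero]
    rw [mul_one_div]
    exact div_self_le_one _
  | succ T ih =>
    have hw : ∀ i, 0 ≤ w i (T + 1) := fun i => (weight_pos hw1 hwrec i (by omega)).le
    calc ∑ i, w i (T + 1 + 1)
        ≤ exp (-η * L (T + 1)) * ∑ i, w i (T + 1) := by
          simp only [hwrec _ (T + 1) (by omega)]
          exact sum_mul_exp_confidence_le hw (fun i => hp i _) (hmix _ (by omega) le_rfl)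
      _ ≤ exp (-η * L (T + 1)) * exp (-η * ∑ t ∈ Finset.Icc 1 T, L t) := by
          gcongr
          exact ih fun t h1 h2 => hmix t h1 (by omega)
      _ = exp (-η * ∑ t ∈ Finset.Icc 1 (T + 1), L t) := by
          rw [← exp_add, Finset.sum_Icc_succ_top (by omega)]
          ring_nf

theorem regret_le (hη : 0 < η) (hp : ∀ i t, p i t ∈ Icc (0 : ℝ) 1)
    (hw1 : ∀ i, w i 1 = 1 / N)
    (hwrec : ∀ i t, 1 ≤ t → w i (t + 1) = w i t * exp (-η * (p i t * ℓ i t + (1 - p i t) * L t)))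
    {T : ℕ} (hmix : ∀ t, 1 ≤ t → t ≤ T →
      ∑ i, p i t * w i t * exp (-η * ℓ i t) ≤ (∑ i, p i t * w i t) * exp (-η * L t))
    (i : Fin N) : ∑ t ∈ Finset.Icc 1 T, p i t * (L t - ℓ i t) ≤ log N / η := by
  have hN : (0 : ℝ) < N := Nat.cast_pos.2 i.pos
  have hle : w i (T + 1) ≤ exp (-η * ∑ t ∈ Finset.Icc 1 T, L t) :=
    (Finset.single_le_sum (fun j _ => (weight_pos hw1 hwrec j (by omega)).le)
      (Finset.mem_univ i)).trans (sum_weight_le hp hw1 hwrec hmix)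
  have hsplit : ∑ t ∈ Finset.Icc 1 T, (p i t * ℓ i t + (1 - p i t) * L t) =
      ∑ t ∈ Finset.Icc 1 T, L t - ∑ t ∈ Finset.Icc 1 T, p i t * (L t - ℓ i t) := by
    rw [← Finset.sum_sub_distrib]
    exact Finset.sum_congr rfl fun t _ => by ring
  rw [weight_eq hwrec, hw1, hsplit, one_div, ← exp_log (inv_pos.2 hN), ← exp_add, exp_le_exp,
    log_inv] at hle
  rw [le_div_iff₀ hη]
  linarith

end AggregatingAlgorithm

theorem aa_crps_confidence_regret_bound_general (a b : ℝ) (hab : a < b) (N T : ℕ)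
    (Fe : Fin N → ℕ → ℝ → ℝ) (hFe : ∀ i t, DistFunc a b (Fe i t))
    (p : Fin N → ℕ → ℝ) (hp : ∀ i t, p i t ∈ Set.Icc (0 : ℝ) 1)
    (y : ℕ → ℝ)
    (w : Fin N → ℕ → ℝ)
    (hw1 : ∀ i, w i 1 = 1 / N)
    (hpos : ∀ t, 1 ≤ t → t ≤ T → 0 < ∑ j, p j t * w j t)
    (G : ℕ → ℝ → ℝ)
    (hG : ∀ t, ∀ u ∈ Set.Icc a b, G t u = 1 / 2 - (1 / 4) * Real.log
      ((∑ i, (p i t * w i t / ∑ j, p j t * w j t) * Real.exp (-2 * (Fe i t u) ^ 2)) /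
        (∑ i, (p i t * w i t / ∑ j, p j t * w j t) *
          Real.exp (-2 * (1 - Fe i t u) ^ 2))))
    (hwrec : ∀ i, ∀ t, 1 ≤ t →
      w i (t + 1) = w i t * Real.exp (-(2 / (b - a)) *
        (p i t * CRPS a b (Fe i t) (y t) + (1 - p i t) * CRPS a b (G t) (y t)))) :
    ∀ i, ∑ t ∈ Finset.Icc 1 T,
        p i t * (CRPS a b (G t) (y t) - CRPS a b (Fe i t) (y t)) ≤
      ((b - a) / 2) * Real.log N := by
  set ℓ : Fin N → ℕ → ℝ := fun i t => CRPS a b (Fe i t) (y t)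
  set L : ℕ → ℝ := fun t => CRPS a b (G t) (y t)
  have hη : 0 < 2 / (b - a) := div_pos two_pos (sub_pos.2 hab)
  have hmix : ∀ t, 1 ≤ t → t ≤ T → ∑ i, p i t * w i t * exp (-(2 / (b - a)) * ℓ i t) ≤
      (∑ i, p i t * w i t) * exp (-(2 / (b - a)) * L t) := by
    intro t h1 h2
    have hc : ∀ j, 0 ≤ p j t * w j t := fun j =>
      mul_nonneg (hp j t).1 (AggregatingAlgorithm.weight_pos (ℓ := ℓ) (L := L) hw1 hwrec j h1).le
    refine sum_mul_exp_le_of_le_neg_log hη hc (hpos t h1 h2) ?_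
    rw [one_div_div]
    exact crps_le_neg_mul_log_sum_mul_exp hab (fun j => div_nonneg (hc j) (hpos t h1 h2).le)
      (by rw [← Finset.sum_div, div_self (hpos t h1 h2).ne'])
      (fun j u hu => (hFe j t).mem_Icc hu) (fun j => (hFe j t).aemeasurable hab.le) (y t) (hG t)
  intro i
  exact (AggregatingAlgorithm.regret_le hη hp hw1 hwrec hmix i).trans_eq (by rw [div_div_eq_mul_div]; ring)

/-- Performance guarantee for Protocol 3a: the Aggregating Algorithm for CRPS with
confidence levels `p_{i,t}` has cumulative discounted regret at most `((b-a)/2)·ln N`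
against every expert. -/
theorem aa_crps_confidence_regret_bound (a b : ℝ) (hab : a < b) (N T : ℕ)
    (hN : 1 ≤ N) (hT : 1 ≤ T)
    (Fe : Fin N → ℕ → ℝ → ℝ) (hFe : ∀ i t, DistFunc a b (Fe i t))
    (p : Fin N → ℕ → ℝ) (hp : ∀ i t, p i t ∈ Set.Icc (0 : ℝ) 1)
    (y : ℕ → ℝ) (hy : ∀ t, y t ∈ Set.Icc a b)
    (w : Fin N → ℕ → ℝ)
    (hw1 : ∀ i, w i 1 = 1 / N)
    (hpos : ∀ t, 1 ≤ t → t ≤ T → 0 < ∑ j, p j t * w j t)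
    (G : ℕ → ℝ → ℝ)
    (hG : ∀ t, ∀ u ∈ Set.Icc a b, G t u = 1 / 2 - (1 / 4) * Real.log
      ((∑ i, (p i t * w i t / ∑ j, p j t * w j t) * Real.exp (-2 * (Fe i t u) ^ 2)) /
        (∑ i, (p i t * w i t / ∑ j, p j t * w j t) *
          Real.exp (-2 * (1 - Fe i t u) ^ 2))))
    (hwrec : ∀ i, ∀ t, 1 ≤ t →
      w i (t + 1) = w i t * Real.exp (-(2 / (b - a)) *
        (p i t * CRPS a b (Fe i t) (y t) + (1 - p i t) * CRPS a b (G t) (y t)))) :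
    ∀ i, ∑ t ∈ Finset.Icc 1 T,
        p i t * (CRPS a b (G t) (y t) - CRPS a b (Fe i t) (y t)) ≤
      ((b - a) / 2) * Real.log N :=
  aa_crps_confidence_regret_bound_general a b hab N T Fe hFe p hp y w hw1 hpos G hG hwrec
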